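/- arXiv:2205.14043 — 5 statements merged into one kernel-verified Lean document; each statement's English description precedes it below -/
import Mathlib

section
/- Let a > b ≥ 0 be integers and let S = {x + yi : c ≤ x < c + a, d ≤ y < d + a} ⊆ ℤ[i] be an a × a square of Gaussian integers. Then distinct elements of S are not congruent modulo a + bi. -/
open GaussianInt

theorem square_distinct_not_congruent (a b c d : ℤ) (hab : a > b) (hb : b ≥ 0)
    (S : Set GaussianInt)
    (hS : S = {z : GaussianInt | c ≤ z.re ∧ z.re < c + a ∧ d ≤ z.im ∧ z.im < d + a})
    (u v : GaussianInt) (hu : u ∈ S) (hv : v ∈ S) (huv : u ≠ v) :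
    ¬ (⟨a, b⟩ : GaussianInt) ∣ (u - v) := by
  subst hS
  rintro ⟨q, hq⟩
  obtain ⟨hu1, hu2, hu3, hu4⟩ := hu
  obtain ⟨hv1, hv2, hv3, hv4⟩ := hv
  set s := q.re with hsdef
  set t := q.im with htdef
  have h1 : u.re - v.re = a * s - b * t := by
    have := congrArg Zsqrtd.re hq
    simp [Zsqrtd.re_mul, Zsqrtd.re_sub] at this
    linarith
  have h2 : u.im - v.im = b * s + a * t := by
    have := congrArg Zsqrtd.im hq
    simp [Zsqrtd.im_mul, Zsqrtd.im_sub] at this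
    linarith
  have hx1 : u.re - v.re ≤ a - 1 := by linarith
  have hx2 : -(a - 1) ≤ u.re - v.re := by linarith
  have hy1 : u.im - v.im ≤ a - 1 := by linarith
  have hy2 : -(a - 1) ≤ u.im - v.im := by linarith
  have hne : ¬ (s = 0 ∧ t = 0) := by
    rintro ⟨hs0, ht0⟩
    rw [hs0, ht0] at h1 h2
    simp at h1 h2
    exact huv (Zsqrtd.ext (by omega) (by omega))
  have hst : s * s + t * t ≤ 1 := by
    nlinarith [sq_nonneg s, sq_nonneg t, sq_nonneg (u.re - v.re), sq_nonneg (u.im - v.im),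
      sq_nonneg (a - 1), sq_nonneg b, mul_self_nonneg (a*s - b*t), mul_self_nonneg (b*s + a*t)]
  have hs1 : -1 ≤ s := by nlinarith
  have hs2 : s ≤ 1 := by nlinarith
  have ht1 : -1 ≤ t := by nlinarith
  have ht2 : t ≤ 1 := by nlinarith
  interval_cases s <;> interval_cases t <;> omega
end

section
/- Let a > b ≥ 0 be integers, S = {x + yi : 0 ≤ x < a, 0 ≤ y < a}, and T = {x + yi : 0 ≤ x < b, −b ≤ y < 0}. Then no two distinct elements of S ∪ T are congruent modulo a + bi, and |S ∪ T| = a² + b², so S ∪ T is a complete set of residues modulo a + bi. -/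
/-!
`S ∪ T` is the tile of the Pythagorean tiling of the plane by squares of sides `a` and `b`, whose
translation lattice is the ideal `(a + bi)`. Comparing coordinates, a difference of two points of
the tile can be a multiple `(a + bi)(m + ni)` only for `|m|, |n| ≤ 1`, and a case check rules out
the eight nonzero ones. So the tile injects into `ℤ[i] / (a + bi)`, which has
`N(a + bi) = a² + b²` elements, as many as the tile; hence the injection is onto.
-/

theorem Set.ncard_Ico_int (a b : ℤ) : (Set.Ico a b).ncard = (b - a).toNat := by
  simpa [← Set.ncard_coe_finset] using Int.card_Ico a b

theorem Set.InjOn.image_eq_univ_of_ncard_eq {α β : Type*} [Finite β] {f : α → β} {s : Set α}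
    (hf : s.InjOn f) (h : s.ncard = Nat.card β) : f '' s = Set.univ :=
  Set.eq_of_subset_of_ncard_le (Set.subset_univ _) (by rw [Set.ncard_univ, hf.ncard_image, h])

theorem Int.abs_le_one_of_abs_mul_lt_two_mul {m N : ℤ} (h : |m * N| < 2 * N) : |m| ≤ 1 := by
  have hN : 0 < N := by linarith [abs_nonneg (m * N)]
  rw [abs_mul, abs_of_pos hN] at h
  have := lt_of_mul_lt_mul_right h hN.le
  omega

namespace Zsqrtd

variable {d : ℤ}

def linearEquivProd (d : ℤ) : ℤ√d ≃ₗ[ℤ] ℤ × ℤ where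
  toFun z := (z.re, z.im)
  invFun p := ⟨p.1, p.2⟩
  map_add' _ _ := rfl
  map_smul' _ _ := by simp
  left_inv _ := rfl
  right_inv _ := rfl

noncomputable def basis (d : ℤ) : Module.Basis (Fin 2) ℤ (ℤ√d) :=
  (Module.Basis.finTwoProd ℤ).map (linearEquivProd d).symm

instance : Module.Free ℤ (ℤ√d) := .of_basis (basis d)

instance : Module.Finite ℤ (ℤ√d) := .of_basis (basis d)

theorem algebraNorm_eq_norm (z : ℤ√d) : Algebra.norm ℤ z = z.norm := by
  rw [Algebra.norm_eq_matrix_det (basis d), Matrix.det_fin_two]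
  simp [basis, linearEquivProd, Algebra.leftMulMatrix_eq_repr_mul, norm_def]

def rectangle (x₀ x₁ y₀ y₁ : ℤ) : Set (ℤ√d) :=
  {z | x₀ ≤ z.re ∧ z.re < x₁ ∧ y₀ ≤ z.im ∧ z.im < y₁}

theorem rectangle_eq_preimage (x₀ x₁ y₀ y₁ : ℤ) :
    (rectangle x₀ x₁ y₀ y₁ : Set (ℤ√d)) = linearEquivProd d ⁻¹' Set.Ico x₀ x₁ ×ˢ Set.Ico y₀ y₁ := by
  ext z
  simp [rectangle, linearEquivProd, and_assoc]

theorem finite_rectangle (x₀ x₁ y₀ y₁ : ℤ) : (rectangle x₀ x₁ y₀ y₁ : Set (ℤ√d)).Finite := by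
  rw [rectangle_eq_preimage]
  exact ((Set.finite_Ico _ _).prod (Set.finite_Ico _ _)).preimage
    (linearEquivProd d).injective.injOn

theorem ncard_rectangle (x₀ x₁ y₀ y₁ : ℤ) :
    (rectangle x₀ x₁ y₀ y₁ : Set (ℤ√d)).ncard = (x₁ - x₀).toNat * (y₁ - y₀).toNat := by
  rw [rectangle_eq_preimage,
    Set.ncard_preimage_of_injective_subset_range (linearEquivProd d).injective (by simp),
    Set.ncard_prod, Set.ncard_Ico_int, Set.ncard_Ico_int]

end Zsqrtd

namespace GaussianInt

theorem card_quotient_span_singleton (z : GaussianInt) :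
    Nat.card (GaussianInt ⧸ Ideal.span {z}) = z.norm.natAbs := by
  rw [← Submodule.cardQuot_apply, ← Ideal.absNorm_apply, Ideal.absNorm_span_singleton,
    Zsqrtd.algebraNorm_eq_norm]

def pythagoreanTile (a b : ℤ) : Set GaussianInt :=
  Zsqrtd.rectangle 0 a 0 a ∪ Zsqrtd.rectangle 0 b (-b) 0

theorem ncard_pythagoreanTile {a b : ℤ} (ha : 0 ≤ a) (hb : 0 ≤ b) :
    (pythagoreanTile a b).ncard = (a ^ 2 + b ^ 2).toNat := by
  have hdisj : Disjoint (Zsqrtd.rectangle 0 a 0 a : Set GaussianInt) (Zsqrtd.rectangle 0 b (-b) 0) :=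
    Set.disjoint_left.2 fun _ h₁ h₂ => (h₂.2.2.2.trans_le h₁.2.2.1).false
  rw [pythagoreanTile,
    Set.ncard_union_eq hdisj (Zsqrtd.finite_rectangle ..) (Zsqrtd.finite_rectangle ..),
    Zsqrtd.ncard_rectangle, Zsqrtd.ncard_rectangle, sub_zero, sub_zero, zero_sub, neg_neg]
  lift a to ℕ using ha
  lift b to ℕ using hb
  norm_cast
  ring

theorem abs_coords_le_one_of_mul_eq {a b m n x y : ℤ} (hb : 0 ≤ b) (hab : b < a)
    (hx : |x| < a) (hy : |y| < a + b) (hre : x = a * m - b * n) (him : y = a * n + b * m) :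
    |m| ≤ 1 ∧ |n| ≤ 1 := by
  have hm : m * (a ^ 2 + b ^ 2) = a * x + b * y := by rw [hre, him]; ring
  have hn : n * (a ^ 2 + b ^ 2) = a * y - b * x := by rw [hre, him]; ring
  rw [abs_lt] at hx hy
  constructor
  · refine Int.abs_le_one_of_abs_mul_lt_two_mul (N := a ^ 2 + b ^ 2) ?_
    rw [hm, abs_lt]
    constructor <;> nlinarith
  · refine Int.abs_le_one_of_abs_mul_lt_two_mul (N := a ^ 2 + b ^ 2) ?_
    rw [hn, abs_lt]
    constructor <;> nlinarith

theorem eq_of_mem_pythagoreanTile_of_dvd_sub {a b : ℤ} (hb : 0 ≤ b) (hab : b < a)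
    {u v : GaussianInt} (hu : u ∈ pythagoreanTile a b) (hv : v ∈ pythagoreanTile a b)
    (h : (⟨a, b⟩ : GaussianInt) ∣ u - v) : u = v := by
  obtain ⟨⟨m, n⟩, hq⟩ := h
  have hre : u.re - v.re = a * m - b * n := by
    simpa [Zsqrtd.re_mul, sub_eq_add_neg] using congrArg Zsqrtd.re hq
  have him : u.im - v.im = a * n + b * m := by
    simpa [Zsqrtd.im_mul] using congrArg Zsqrtd.im hq
  simp only [pythagoreanTile, Zsqrtd.rectangle, Set.mem_union, Set.mem_ofPred_eq] at hu hv
  obtain ⟨hm, hn⟩ := abs_coords_le_one_of_mul_eq hb hab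
    (by rw [abs_lt]; omega) (by rw [abs_lt]; omega) hre him
  obtain ⟨hm₁, hm₂⟩ := abs_le.1 hm
  obtain ⟨hn₁, hn₂⟩ := abs_le.1 hn
  ext <;> interval_cases m <;> interval_cases n <;> omega

theorem exists_mem_pythagoreanTile_dvd_sub {a b : ℤ} (hb : 0 ≤ b) (hab : b < a)
    (z : GaussianInt) : ∃ r ∈ pythagoreanTile a b, (⟨a, b⟩ : GaussianInt) ∣ z - r := by
  set I := Ideal.span {(⟨a, b⟩ : GaussianInt)}
  have hinj : (pythagoreanTile a b).InjOn (Ideal.Quotient.mk I) := fun u hu v hv huv =>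
    eq_of_mem_pythagoreanTile_of_dvd_sub hb hab hu hv
      (Ideal.mem_span_singleton.1 (Ideal.Quotient.eq.1 huv))
  have hN : 0 < a ^ 2 + b ^ 2 := by nlinarith
  have hcard : Nat.card (GaussianInt ⧸ I) = (a ^ 2 + b ^ 2).toNat := by
    rw [card_quotient_span_singleton, show Zsqrtd.norm (⟨a, b⟩ : GaussianInt) = a ^ 2 + b ^ 2 by
      rw [Zsqrtd.norm_def]; ring]
    omega
  have : Finite (GaussianInt ⧸ I) := Nat.finite_of_card_ne_zero (by omega)
  have hsurj := hinj.image_eq_univ_of_ncard_eq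
    ((ncard_pythagoreanTile (hb.trans hab.le) hb).trans hcard.symm)
  obtain ⟨r, hr, hrz⟩ := hsurj ▸ Set.mem_univ (Ideal.Quotient.mk I z)
  exact ⟨r, hr, Ideal.mem_span_singleton.1 (Ideal.Quotient.eq.1 hrz.symm)⟩

end GaussianInt

theorem two_squares_complete_residues (a b : ℤ) (hab : a > b) (hb : b ≥ 0)
    (S T : Set GaussianInt)
    (hS : S = {z : GaussianInt | 0 ≤ z.re ∧ z.re < a ∧ 0 ≤ z.im ∧ z.im < a})
    (hT : T = {z : GaussianInt | 0 ≤ z.re ∧ z.re < b ∧ -b ≤ z.im ∧ z.im < 0}) :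
    (∀ u ∈ S ∪ T, ∀ v ∈ S ∪ T, u ≠ v → ¬ (⟨a, b⟩ : GaussianInt) ∣ (u - v)) ∧
    ((S ∪ T).ncard = (a ^ 2 + b ^ 2).toNat) ∧
    (∀ z : GaussianInt, ∃ r ∈ S ∪ T, (⟨a, b⟩ : GaussianInt) ∣ (z - r)) := by
  subst hS hT
  exact ⟨fun u hu v hv huv h =>
      huv (GaussianInt.eq_of_mem_pythagoreanTile_of_dvd_sub hb hab hu hv h),
    GaussianInt.ncard_pythagoreanTile (hb.trans hab.le) hb,
    GaussianInt.exists_mem_pythagoreanTile_dvd_sub hb hab⟩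
end

section
/- For the integers ℤ, the n-th Motzkin set is A_{ℤ,n} = {0, ±1, ..., ±(2^{n+1} − 1)}; equivalently, the minimal Euclidean function on ℤ is φ_ℤ(x) = ⌊log₂|x|⌋. -/
def MotzkinSetZ : ℕ → Set ℤ
  | 0 => {x | x = 0 ∨ IsUnit x}
  | n + 1 => MotzkinSetZ n ∪ {β | ∀ x : ℤ, ∃ r ∈ MotzkinSetZ n, β ∣ (x - r)}

theorem motzkin_int (n : ℕ) : MotzkinSetZ n = {x : ℤ | |x| ≤ 2 ^ (n + 1) - 1} := by
  induction n with
  | zero =>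
    ext x
    simp [MotzkinSetZ, Int.isUnit_iff, abs_le]
    omega
  | succ n ih =>
    have hpow : (2:ℤ) ^ (n + 2) = 2 * 2 ^ (n + 1) := by ring
    have hpos : (0:ℤ) < 2 ^ (n + 1) := by positivity
    ext β
    simp only [MotzkinSetZ, ih, Set.mem_union, Set.mem_setOf_eq]
    constructor
    · rintro (h | h)
      · omega
      · by_contra hb
        push_neg at hb
        obtain ⟨r, hr, hd⟩ := h (2 ^ (n + 1))
        rw [abs_le] at hr
        have hpos' : (0:ℤ) < 2 ^ (n + 1) - r := by omega
        have := Int.le_of_dvd hpos' ((abs_dvd β _).mpr hd)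
        omega
    · intro h
      by_cases h1 : |β| ≤ 2 ^ (n + 1) - 1
      · exact Or.inl h1
      · right
        intro x
        have hβ : β ≠ 0 := by
          intro h0
          rw [h0] at h1
          simp at h1
          omega
        have hb0 : 0 < |β| := abs_pos.mpr hβ
        set r0 := x % |β| with hr0
        have hr0nn : 0 ≤ r0 := Int.emod_nonneg x (by omega)
        have hr0lt : r0 < |β| := Int.emod_lt_of_pos x hb0
        have hdvd : |β| ∣ x - r0 := Int.dvd_self_sub_of_emod_eq rfl
        by_cases hc : r0 ≤ 2 ^ (n + 1) - 1
        · exact ⟨r0, by rw [abs_le]; omega, (abs_dvd β _).mp hdvd⟩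
        · refine ⟨r0 - |β|, by rw [abs_le]; omega, ?_⟩
          have : x - (r0 - |β|) = (x - r0) + |β| := by ring
          rw [this]
          exact dvd_add ((abs_dvd β _).mp hdvd) ((dvd_abs β β).mpr dvd_rfl)
end

section
/- If xy ∈ B_n \ {0}, then x ∈ B_n \ {0}, where B_n is the set of Gaussian integers expressible as Σ_{j=0}^n v_j(1+i)^j with each v_j ∈ {0, ±1, ±i}. That is, the sets B_n \ {0} are closed under taking divisors. -/
/-!
With `π = 1 + i`, `B (n + 1) = {v + π z' | v ∈ {0, ±1, ±i}, z' ∈ B n}`; the digits are `0` and the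
units, and `2 = -i π²`. From this recursion: `B n` lies in the octagon `|x|, |y| ≤ w n - 2`,
`|x| + |y| ≤ w (n + 1) - 3`; every primitive point of that octagon (the set `S n`) lies in `B n`;
and for `u ≠ 0`, `2 ^ l * u ∈ B n` forces `u ∈ B (n - 2 l)`.

Let `M m` be the largest norm on the `m`-th octagon. The octagon contains every point of norm at
most `M m / 2`, and `4 M m ≤ M (m + 2)`. Write `x y = 2 ^ j u` and `x = 2 ^ l v` with `u`, `v`
primitive, so `v y = 2 ^ (j - l) u` and `u ∈ B m` with `n = m + 2 j`. If `y` is not a unit then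
`N y ≥ 2`, so `2 N v ≤ 4 ^ (j - l) N u ≤ 4 ^ (j - l) M m ≤ M (m + 2 (j - l))`; hence `v` lies in
`S (n - 2 l) ⊆ B (n - 2 l)` and `x ∈ B n`. If `y` is a unit, `x = y⁻¹ (x y) ∈ B n` directly.
-/

def Bset (n : ℕ) : Set GaussianInt :=
  {z | ∃ v : ℕ → GaussianInt,
    (∀ j, v j ∈ ({0, 1, -1, ⟨0, 1⟩, ⟨0, -1⟩} : Set GaussianInt)) ∧
    z = ∑ j ∈ Finset.range (n + 1), v j * (⟨1, 1⟩ : GaussianInt) ^ j}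

local notation "π" => (⟨1, 1⟩ : GaussianInt)

namespace GaussianInt

lemma norm_eq_sq_add_sq (z : GaussianInt) : z.norm = z.re ^ 2 + z.im ^ 2 := by
  rw [Zsqrtd.norm_def]; ring

lemma octant_induction {P : GaussianInt → Prop} (hI : ∀ z, P z → P (⟨0, 1⟩ * z))
    (hstar : ∀ z, P z → P (star z)) (h : ∀ z : GaussianInt, 0 ≤ z.im → z.im ≤ z.re → P z)
    (z : GaussianInt) : P z := by
  have quadrant : ∀ z : GaussianInt, 0 ≤ z.re → 0 ≤ z.im → P z := by
    rintro ⟨a, b⟩ ha hb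
    rcases le_total b a with hba | hab
    · exact h _ hb hba
    · convert hI _ (hstar _ (h ⟨b, a⟩ ha hab)) using 1
      ext <;> simp
  have upper : ∀ z : GaussianInt, 0 ≤ z.im → P z := by
    rintro ⟨a, b⟩ hb
    rcases le_total 0 a with ha | ha
    · exact quadrant _ ha hb
    · convert hI _ (quadrant ⟨b, -a⟩ hb (by simpa)) using 1
      ext <;> simp
  obtain ⟨a, b⟩ := z
  rcases le_total 0 b with hb | hb
  · exact upper _ hb
  · convert hstar _ (upper ⟨a, -b⟩ (by simpa)) using 1
    ext <;> simp

end GaussianInt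

open GaussianInt

namespace Bset

def digits : Set GaussianInt := {0, 1, -1, ⟨0, 1⟩, ⟨0, -1⟩}

lemma mem_digits_iff_norm_le_one {v : GaussianInt} : v ∈ digits ↔ v.norm ≤ 1 := by
  obtain ⟨a, b⟩ := v
  simp only [digits, norm_eq_sq_add_sq, Set.mem_insert_iff, Set.mem_singleton_iff,
    Zsqrtd.ext_iff, Zsqrtd.re_zero, Zsqrtd.im_zero, Zsqrtd.re_one, Zsqrtd.im_one,
    Zsqrtd.re_neg, Zsqrtd.im_neg, neg_zero]
  constructor
  · rintro (⟨rfl, rfl⟩ | ⟨rfl, rfl⟩ | ⟨rfl, rfl⟩ | ⟨rfl, rfl⟩ | ⟨rfl, rfl⟩) <;> norm_num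
  · intro h
    have ha : a ^ 2 ≤ 1 ^ 2 := by nlinarith [sq_nonneg b]
    have hb : b ^ 2 ≤ 1 ^ 2 := by nlinarith [sq_nonneg a]
    obtain ⟨ha₁, ha₂⟩ := abs_le.1 (abs_le_of_sq_le_sq ha zero_le_one)
    obtain ⟨hb₁, hb₂⟩ := abs_le.1 (abs_le_of_sq_le_sq hb zero_le_one)
    interval_cases a <;> interval_cases b <;> omega

lemma zero_mem_digits : (0 : GaussianInt) ∈ digits := by simp [digits]
lemma one_mem_digits : (1 : GaussianInt) ∈ digits := by simp [digits]
lemma I_mem_digits : (⟨0, 1⟩ : GaussianInt) ∈ digits := by simp [digits]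
lemma neg_I_mem_digits : (⟨0, -1⟩ : GaussianInt) ∈ digits := by simp [digits]

lemma mul_mem_digits {u v : GaussianInt} (hu : u ∈ digits) (hv : v ∈ digits) :
    u * v ∈ digits := by
  rw [mem_digits_iff_norm_le_one, Zsqrtd.norm_mul] at *
  exact mul_le_one₀ hu (GaussianInt.norm_nonneg v) hv

lemma star_mem_digits {v : GaussianInt} (hv : v ∈ digits) : star v ∈ digits := by
  rwa [mem_digits_iff_norm_le_one, Zsqrtd.norm_conj, ← mem_digits_iff_norm_le_one]

lemma mem_digits_of_isUnit {v : GaussianInt} (hv : IsUnit v) : v ∈ digits := by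
  rw [mem_digits_iff_norm_le_one, (Zsqrtd.norm_eq_one_iff' (by norm_num) v).2 hv]

lemma eq_zero_of_mem_digits_of_pi_dvd {v : GaussianInt} (hv : v ∈ digits) (hπ : π ∣ v) :
    v = 0 := by
  obtain ⟨c, rfl⟩ := hπ
  rw [mem_digits_iff_norm_le_one, Zsqrtd.norm_mul, show Zsqrtd.norm π = 2 from rfl] at hv
  have hc : c.norm = 0 := by linarith [GaussianInt.norm_nonneg c]
  rw [GaussianInt.norm_eq_zero.1 hc, mul_zero]

lemma abs_re_add_abs_im_le_one {v : GaussianInt} (hv : v ∈ digits) : |v.re| + |v.im| ≤ 1 := by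
  simp only [digits, Set.mem_insert_iff, Set.mem_singleton_iff] at hv
  rcases hv with rfl | rfl | rfl | rfl | rfl <;> norm_num

lemma mem_zero_iff {z : GaussianInt} : z ∈ Bset 0 ↔ z ∈ digits := by
  constructor
  · rintro ⟨v, hv, rfl⟩
    rw [Finset.sum_range_one, pow_zero, mul_one]
    exact hv 0
  · exact fun hz => ⟨fun _ => z, fun _ => hz, by simp⟩

lemma mem_succ_iff {n : ℕ} {z : GaussianInt} :
    z ∈ Bset (n + 1) ↔ ∃ v ∈ digits, ∃ z' ∈ Bset n, z = v + π * z' := by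
  have expand : ∀ v : ℕ → GaussianInt, ∑ j ∈ Finset.range (n + 1 + 1), v j * π ^ j =
      v 0 + π * ∑ j ∈ Finset.range (n + 1), v (j + 1) * π ^ j := fun v => by
    rw [Finset.sum_range_succ', Finset.mul_sum, add_comm]
    simp only [pow_zero, mul_one, pow_succ]
    congr 1
    exact Finset.sum_congr rfl fun j _ => by ring
  constructor
  · rintro ⟨v, hv, rfl⟩
    exact ⟨v 0, hv 0, _, ⟨fun j => v (j + 1), fun j => hv (j + 1), rfl⟩, expand v⟩
  · rintro ⟨v₀, hv₀, _, ⟨v, hv, rfl⟩, rfl⟩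
    let v' : ℕ → GaussianInt := fun | 0 => v₀ | j + 1 => v j
    exact ⟨v', fun | 0 => hv₀ | j + 1 => hv j, (expand v').symm⟩

lemma zero_mem (n : ℕ) : (0 : GaussianInt) ∈ Bset n :=
  ⟨fun _ => 0, fun _ => zero_mem_digits, by simp⟩

lemma digit_mul_mem {n : ℕ} {ε z : GaussianInt} (hε : ε ∈ digits) (hz : z ∈ Bset n) :
    ε * z ∈ Bset n := by
  induction n generalizing z with
  | zero => exact mem_zero_iff.2 (mul_mem_digits hε (mem_zero_iff.1 hz))
  | succ n ih =>
    obtain ⟨v, hv, z', hz', rfl⟩ := mem_succ_iff.1 hz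
    exact mem_succ_iff.2 ⟨ε * v, mul_mem_digits hε hv, ε * z', ih hz', by ring⟩

lemma star_mem {n : ℕ} {z : GaussianInt} (hz : z ∈ Bset n) : star z ∈ Bset n := by
  induction n generalizing z with
  | zero => exact mem_zero_iff.2 (star_mem_digits (mem_zero_iff.1 hz))
  | succ n ih =>
    obtain ⟨v, hv, z', hz', rfl⟩ := mem_succ_iff.1 hz
    refine mem_succ_iff.2
      ⟨star v, star_mem_digits hv, _, digit_mul_mem neg_I_mem_digits (ih hz'), ?_⟩
    rw [star_add, star_mul', show star π = π * ⟨0, -1⟩ by decide]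
    ring

lemma two_mul_eq (z : GaussianInt) : 2 * z = π * (π * (⟨0, -1⟩ * z)) := by
  rw [← mul_assoc, ← mul_assoc, show π * π * ⟨0, -1⟩ = 2 by decide]

lemma two_mul_mem {n : ℕ} {z : GaussianInt} (hz : z ∈ Bset n) : 2 * z ∈ Bset (n + 2) := by
  refine mem_succ_iff.2 ⟨0, zero_mem_digits, _, mem_succ_iff.2 ⟨0, zero_mem_digits, _,
    digit_mul_mem neg_I_mem_digits hz, rfl⟩, ?_⟩
  rw [two_mul_eq, zero_add, zero_add]

lemma two_pow_mul_mem {n : ℕ} {z : GaussianInt} (hz : z ∈ Bset n) (l : ℕ) :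
    2 ^ l * z ∈ Bset (n + 2 * l) := by
  induction l with
  | zero => simpa using hz
  | succ l ih => simpa [pow_succ', mul_assoc, mul_add, ← add_assoc] using two_mul_mem ih

lemma eq_zero_of_pi_mul_mem_zero {z : GaussianInt} (h : π * z ∈ Bset 0) : z = 0 := by
  have h0 := eq_zero_of_mem_digits_of_pi_dvd (mem_zero_iff.1 h) (dvd_mul_right π z)
  exact (mul_eq_zero.1 h0).resolve_left (by decide)

lemma mem_of_pi_mul_mem_succ {n : ℕ} {z : GaussianInt} (h : π * z ∈ Bset (n + 1)) :
    z ∈ Bset n := by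
  obtain ⟨v, hv, z', hz', he⟩ := mem_succ_iff.1 h
  have hv0 : v = 0 := eq_zero_of_mem_digits_of_pi_dvd hv
    ((dvd_add_left (dvd_mul_right π z')).1 (he ▸ dvd_mul_right π z))
  rw [hv0, zero_add] at he
  rwa [mul_left_cancel₀ (by decide) he]

lemma mem_of_two_mul_mem {n : ℕ} {z : GaussianInt} (h : 2 * z ∈ Bset (n + 2)) : z ∈ Bset n := by
  rw [two_mul_eq] at h
  simpa [← mul_assoc, show (⟨0, 1⟩ : GaussianInt) * ⟨0, -1⟩ = 1 by decide] using
    digit_mul_mem I_mem_digits (mem_of_pi_mul_mem_succ (mem_of_pi_mul_mem_succ h))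

lemma eq_zero_of_two_mul_mem_of_lt_two {n : ℕ} {z : GaussianInt} (hn : n < 2)
    (h : 2 * z ∈ Bset n) : z = 0 := by
  rw [two_mul_eq] at h
  have h' : ⟨0, -1⟩ * z = 0 := by
    interval_cases n
    · exact (mul_eq_zero.1 (eq_zero_of_pi_mul_mem_zero h)).resolve_left (by decide)
    · exact eq_zero_of_pi_mul_mem_zero (mem_of_pi_mul_mem_succ h)
  exact (mul_eq_zero.1 h').resolve_left (by decide)

lemma exists_of_two_pow_mul_mem {n l : ℕ} {z : GaussianInt} (hz : z ≠ 0)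
    (h : 2 ^ l * z ∈ Bset n) : ∃ m, n = m + 2 * l ∧ z ∈ Bset m := by
  induction l generalizing z with
  | zero => exact ⟨n, rfl, by simpa using h⟩
  | succ l ih =>
    obtain ⟨m, rfl, hm⟩ := ih (mul_ne_zero two_ne_zero hz) (by rwa [← mul_assoc, ← pow_succ])
    have hm₂ : 2 ≤ m := by
      by_contra! hlt
      exact hz (eq_zero_of_two_mul_mem_of_lt_two hlt hm)
    obtain ⟨k, rfl⟩ := Nat.exists_eq_add_of_le' hm₂
    exact ⟨k, by ring, mem_of_two_mul_mem hm⟩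

/-- `w (2 k) = 3 * 2 ^ k` and `w (2 k + 1) = 4 * 2 ^ k`. -/
def w : ℕ → ℤ
  | 0 => 3
  | 1 => 4
  | m + 2 => 2 * w m

lemma w_growth (m : ℕ) :
    3 ≤ w m ∧ w m + 1 ≤ w (m + 1) ∧ w (m + 1) ≤ 2 * w m - 2 ∧ 2 ∣ w (m + 1) := by
  induction m with
  | zero => simp [w]
  | succ m ih =>
    have h : w (m + 1 + 1) = 2 * w m := rfl
    omega

def octagon (m : ℕ) : Set GaussianInt :=
  {z | |z.re| ≤ w m - 2 ∧ |z.im| ≤ w m - 2 ∧ |z.re| + |z.im| ≤ w (m + 1) - 3}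

/-- The set `S_m` of the paper. -/
def primitiveOctagon (m : ℕ) : Set GaussianInt := {z ∈ octagon m | ¬(2 ∣ z.re ∧ 2 ∣ z.im)}

lemma subset_octagon (n : ℕ) : Bset n ⊆ octagon n := by
  intro z hz
  induction n generalizing z with
  | zero =>
    have h := abs_re_add_abs_im_le_one (mem_zero_iff.1 hz)
    simp only [octagon, Set.mem_ofPred_eq, w, abs_eq_max_neg] at h ⊢
    omega
  | succ n ih =>
    obtain ⟨v, hv, z', hz', rfl⟩ := mem_succ_iff.1 hz
    have hv := abs_re_add_abs_im_le_one hv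
    obtain ⟨h₁, h₂, h₃⟩ := ih hz'
    have hw : w (n + 1 + 1) = 2 * w n := rfl
    have := w_growth n
    simp only [octagon, Set.mem_ofPred_eq, Zsqrtd.re_add, Zsqrtd.im_add, Zsqrtd.re_mul,
      Zsqrtd.im_mul, abs_eq_max_neg] at hv h₁ h₂ h₃ ⊢
    omega

lemma mem_digits_of_mem_octagon_zero {z : GaussianInt} (hz : z ∈ octagon 0) : z ∈ digits := by
  obtain ⟨-, -, h⟩ := hz
  rw [mem_digits_iff_norm_le_one, norm_eq_sq_add_sq, ← sq_abs z.re, ← sq_abs z.im]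
  have : w 1 = 4 := rfl
  nlinarith [abs_nonneg z.re, abs_nonneg z.im]

/-- The norm of the corner `(w m - 2, w (m + 1) - w m - 1)`, the point of `octagon m` farthest
from `0`. -/
def maxNorm (m : ℕ) : ℤ := (w m - 2) ^ 2 + (w (m + 1) - w m - 1) ^ 2

lemma norm_le_maxNorm {m : ℕ} {z : GaussianInt} (hz : z ∈ octagon m) : z.norm ≤ maxNorm m := by
  obtain ⟨h₁, h₂, h₃⟩ := hz
  obtain ⟨hw₁, hw₂, hw₃, -⟩ := w_growth m
  rw [norm_eq_sq_add_sq, ← sq_abs z.re, ← sq_abs z.im, maxNorm]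
  set p := |z.re|
  set q := |z.im|
  have hp : 0 ≤ p := abs_nonneg _
  have hq : 0 ≤ q := abs_nonneg _
  rcases le_or_gt (p + q) (w m - 2) with hle | hgt
  · nlinarith
  · nlinarith [mul_nonneg (by linarith : 0 ≤ w m - 2 - p) (by linarith : 0 ≤ w m - 2 - q),
      mul_nonneg (by linarith : 0 ≤ w (m + 1) - 3 - (p + q))
        (by linarith : 0 ≤ w (m + 1) - 3 + (p + q) - 2 * (w m - 2))]

lemma mem_octagon_of_two_mul_norm_le {m : ℕ} {z : GaussianInt} (h : 2 * z.norm ≤ maxNorm m) :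
    z ∈ octagon m := by
  obtain ⟨hw₁, hw₂, hw₃, -⟩ := w_growth m
  rw [norm_eq_sq_add_sq, maxNorm] at h
  have hX : maxNorm m ≤ 2 * (w m - 2) ^ 2 := by
    rw [maxNorm]; nlinarith
  have hXY : maxNorm m ≤ (w (m + 1) - 3) ^ 2 := by
    rw [maxNorm]; nlinarith
  refine ⟨abs_le_of_sq_le_sq ?_ (by linarith), abs_le_of_sq_le_sq ?_ (by linarith), ?_⟩
  · nlinarith [sq_nonneg z.im]
  · nlinarith [sq_nonneg z.re]
  · have := abs_le_of_sq_le_sq (a := |z.re| + |z.im|) (b := w (m + 1) - 3)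
      (by nlinarith [sq_abs z.re, sq_abs z.im, sq_nonneg (|z.re| - |z.im|)]) (by linarith)
    rwa [abs_of_nonneg (by positivity)] at this

lemma four_pow_mul_maxNorm_le (m t : ℕ) : 4 ^ t * maxNorm m ≤ maxNorm (m + 2 * t) := by
  induction t with
  | zero => simp
  | succ t ih =>
    obtain ⟨hw₁, hw₂, -, -⟩ := w_growth (m + 2 * t)
    have hstep : 4 * maxNorm (m + 2 * t) ≤ maxNorm (m + 2 * (t + 1)) := by
      have h₁ : w (m + 2 * (t + 1)) = 2 * w (m + 2 * t) := rfl
      have h₂ : w (m + 2 * (t + 1) + 1) = 2 * w (m + 2 * t + 1) := rfl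
      rw [maxNorm, maxNorm, h₁, h₂]
      nlinarith
    calc 4 ^ (t + 1) * maxNorm m = 4 * (4 ^ t * maxNorm m) := by ring
      _ ≤ 4 * maxNorm (m + 2 * t) := by linarith
      _ ≤ maxNorm (m + 2 * (t + 1)) := hstep

lemma I_mul_mem_primitiveOctagon_iff {m : ℕ} {z : GaussianInt} :
    ⟨0, 1⟩ * z ∈ primitiveOctagon m ↔ z ∈ primitiveOctagon m := by
  simp only [primitiveOctagon, octagon, Set.mem_ofPred_eq, Zsqrtd.re_mul, Zsqrtd.im_mul,
    abs_eq_max_neg]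
  omega

lemma star_mem_primitiveOctagon_iff {m : ℕ} {z : GaussianInt} :
    star z ∈ primitiveOctagon m ↔ z ∈ primitiveOctagon m := by
  simp only [primitiveOctagon, octagon, Set.mem_ofPred_eq, Zsqrtd.re_star, Zsqrtd.im_star,
    abs_eq_max_neg]
  omega

/-- `⟨p, q⟩ = π * ⟨(p + q) / 2, (q - p) / 2⟩`, and the coordinates of the second factor sum to the
odd number `q`. -/
lemma mem_succ_of_eq_add_odd {m : ℕ} (ih : primitiveOctagon m ⊆ Bset m) {z v : GaussianInt}
    (hv : v ∈ digits) {p q : ℤ}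
    (hz : z = v + ⟨p, q⟩) (hp : p % 2 = 1) (hq : q % 2 = 1)
    (hpq : |p| + |q| ≤ 2 * w m - 4) (hp' : |p| ≤ w (m + 1) - 3) (hq' : |q| ≤ w (m + 1) - 3) :
    z ∈ Bset (m + 1) := by
  have := w_growth m
  have hz' : (⟨(p + q) / 2, (q - p) / 2⟩ : GaussianInt) ∈ primitiveOctagon m := by
    simp only [primitiveOctagon, octagon, Set.mem_ofPred_eq, abs_eq_max_neg] at hpq hp' hq' ⊢
    omega
  refine mem_succ_iff.2 ⟨v, hv, _, ih hz', ?_⟩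
  rw [hz]
  ext
  · simp only [Zsqrtd.re_add, Zsqrtd.re_mul, one_mul, neg_mul, mul_one, add_right_inj]; omega
  · simp only [Zsqrtd.im_add, Zsqrtd.im_mul, one_mul, add_right_inj]; omega

lemma mem_succ_of_mem_primitiveOctagon_of_octant {m : ℕ}
    (ih : primitiveOctagon m ⊆ Bset m) {z : GaussianInt}
    (hz : z ∈ primitiveOctagon (m + 1)) (h₀ : 0 ≤ z.im) (h₁ : z.im ≤ z.re) : z ∈ Bset (m + 1) := by
  obtain ⟨a, b⟩ := z
  obtain ⟨⟨ha, hb, hab⟩, hprim⟩ := hz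
  dsimp only at ha hb hab hprim h₀ h₁
  by_cases h_one : a = 1 ∧ b = 0
  · obtain ⟨rfl, rfl⟩ := h_one
    exact mem_succ_iff.2 ⟨1, one_mem_digits, 0, zero_mem m, by decide⟩
  suffices ∃ v ∈ digits, ∃ p q : ℤ, (⟨a, b⟩ : GaussianInt) = v + ⟨p, q⟩ ∧ p % 2 = 1 ∧
      q % 2 = 1 ∧ max p (-p) + max q (-q) ≤ 2 * w m - 4 ∧ max p (-p) ≤ w (m + 1) - 3 ∧
      max q (-q) ≤ w (m + 1) - 3 by
    obtain ⟨v, hv, p, q, hz, hp, hq, hpq, hp', hq'⟩ := this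
    simp only [← abs_eq_max_neg] at hpq hp' hq'
    exact mem_succ_of_eq_add_odd ih hv hz hp hq hpq hp' hq'
  have hw : w (m + 1 + 1) = 2 * w m := rfl
  have := w_growth m
  simp only [abs_eq_max_neg] at ha hb hab
  -- Pick `v` making both coordinates of `z - v` odd by moving the even one towards `0`.
  rcases Int.emod_two_eq_zero_or_one a with ha₂ | ha₂ <;>
    rcases Int.emod_two_eq_zero_or_one b with hb₂ | hb₂
  · omega
  · exact ⟨1, one_mem_digits, a - 1, b, by ext <;> simp, by omega⟩
  · rcases (by omega : b = 0 ∨ 2 ≤ b) with rfl | hb₂'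
    · exact ⟨⟨0, -1⟩, neg_I_mem_digits, a, 1, by ext <;> simp, by omega⟩
    · exact ⟨⟨0, 1⟩, I_mem_digits, a, b - 1, by ext <;> simp, by omega⟩
  · exact ⟨0, zero_mem_digits, a, b, by simp, by omega⟩

theorem primitiveOctagon_subset (m : ℕ) : primitiveOctagon m ⊆ Bset m := by
  intro z hz
  induction m generalizing z with
  | zero => exact mem_zero_iff.2 (mem_digits_of_mem_octagon_zero hz.1)
  | succ m ih =>
    revert hz
    refine octant_induction (P := fun z => z ∈ primitiveOctagon (m + 1) → z ∈ Bset (m + 1))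
      (fun z h hz => digit_mul_mem I_mem_digits (h (I_mul_mem_primitiveOctagon_iff.1 hz)))
      (fun z h hz => star_mem (h (star_mem_primitiveOctagon_iff.1 hz)))
      (fun z h₀ h₁ hz => mem_succ_of_mem_primitiveOctagon_of_octant ih hz h₀ h₁) z

lemma norm_two_pow_mul (t : ℕ) (u : GaussianInt) : (2 ^ t * u).norm = 4 ^ t * u.norm := by
  rw [Zsqrtd.norm_mul]
  congr 1
  exact map_pow Zsqrtd.normMonoidHom 2 t

lemma mem_of_mul_mem_of_two_le_norm {n : ℕ} {x y : GaussianInt} (h : x * y ∈ Bset n)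
    (hne : x * y ≠ 0) (hy : 2 ≤ y.norm) : x ∈ Bset n := by
  have hfin {z : GaussianInt} (hz : z ≠ 0) : FiniteMultiplicity 2 z :=
    .of_not_isUnit (by rw [← Zsqrtd.norm_eq_one_iff' (by norm_num)]; decide) hz
  have hx0 : x ≠ 0 := left_ne_zero_of_mul hne
  obtain ⟨u, hxy, hu⟩ := (hfin hne).exists_eq_pow_mul_and_not_dvd
  obtain ⟨v, hx, hv⟩ := (hfin hx0).exists_eq_pow_mul_and_not_dvd
  obtain ⟨t, ht⟩ := Nat.exists_eq_add_of_le
    ((hfin hne).le_multiplicity_of_pow_dvd ((pow_multiplicity_dvd 2 x).mul_right y))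
  obtain ⟨m, hn, hum⟩ := exists_of_two_pow_mul_mem (right_ne_zero_of_mul (hxy ▸ hne)) (hxy ▸ h)
  have hvy : v * y = 2 ^ t * u := by
    refine mul_left_cancel₀ (pow_ne_zero (multiplicity 2 x) two_ne_zero) ?_
    rw [← mul_assoc, ← hx, hxy, ht, pow_add, mul_assoc]
  have hnorm : 2 * v.norm ≤ maxNorm (m + 2 * t) := calc
    2 * v.norm ≤ v.norm * y.norm := by nlinarith [GaussianInt.norm_nonneg v]
    _ = 4 ^ t * u.norm := by rw [← Zsqrtd.norm_mul, hvy, norm_two_pow_mul]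
    _ ≤ 4 ^ t * maxNorm m := by gcongr; exact norm_le_maxNorm (subset_octagon m hum)
    _ ≤ maxNorm (m + 2 * t) := four_pow_mul_maxNorm_le m t
  have hvS : v ∈ primitiveOctagon (m + 2 * t) :=
    ⟨mem_octagon_of_two_mul_norm_le hnorm, by rwa [← Zsqrtd.intCast_dvd]⟩
  rw [hx, hn, ht]
  convert two_pow_mul_mem (primitiveOctagon_subset _ hvS) (multiplicity 2 x) using 2
  ring

end Bset

open Bset in
theorem Bset_closed_under_divisors (n : ℕ) (x y : GaussianInt)
    (h : x * y ∈ Bset n) (hne : x * y ≠ 0) :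
    x ∈ Bset n ∧ x ≠ 0 := by
  refine ⟨?_, left_ne_zero_of_mul hne⟩
  by_cases hy : IsUnit y
  · obtain ⟨y', hy'⟩ := hy.exists_left_inv
    have hx : x = y' * (x * y) := by rw [mul_left_comm, hy', mul_one]
    exact hx ▸ digit_mul_mem (mem_digits_of_isUnit (.of_mul_eq_one y hy')) h
  · have hy₂ : 2 ≤ y.norm := by
      have := GaussianInt.norm_pos.2 (right_ne_zero_of_mul hne)
      have := mt (Zsqrtd.norm_eq_one_iff' (by norm_num) y).1 hy
      omega
    exact mem_of_mul_mem_of_two_le_norm h hne hy₂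
end

section
/- Suppose x + yi ∈ Oct_n and 2^l exactly divides gcd(x, y) with l ≠ ⌊n/2⌋ + 1 (and x + yi ≠ 0). Then l ≤ ⌊n/2⌋ and x + yi ∈ B_{n+1}. -/
def w (n : ℕ) : ℕ := if n % 2 = 0 then 3 * 2 ^ (n / 2) else 4 * 2 ^ (n / 2)

/-!
Write `z = 2 ^ l * z'` with `z'` primitive. Since `w n ≤ 2 ^ (⌊n/2⌋ + 2)`, the octagon `Oct n`
contains no nonzero multiple of `2 ^ (⌊n/2⌋ + 2)`, so `l ≤ ⌊n/2⌋` once `l = ⌊n/2⌋ + 1` is excluded.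
As `w (k + 2l) = 2 ^ l * w k`, dividing by `2 ^ l` maps `Oct n` into `Oct (n + 1 - 2l)`.
A primitive `z ∈ Oct (m + 1)` is `v + (1 + i) z'` with a digit `v` and a primitive `z' ∈ Oct m`,
so by induction primitive elements of `Oct m` lie in `B_m`; finally `2 = -i (1 + i)²` gives
`2 ^ l B_m ⊆ B_(m + 2l)`.
-/

lemma w_even (k : ℕ) : w (2 * k) = 3 * 2 ^ k := by
  simp [w]

lemma w_odd (k : ℕ) : w (2 * k + 1) = 4 * 2 ^ k := by
  simp [w, Nat.add_mod, Nat.add_div]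

lemma w_add_two (n : ℕ) : w (n + 2) = 2 * w n := by
  rcases Nat.even_or_odd' n with ⟨k, rfl | rfl⟩
  · rw [show 2 * k + 2 = 2 * (k + 1) by ring, w_even, w_even, pow_succ]; ring
  · rw [show 2 * k + 1 + 2 = 2 * (k + 1) + 1 by ring, w_odd, w_odd, pow_succ]; ring

lemma w_add_two_mul (n l : ℕ) : w (n + 2 * l) = 2 ^ l * w n := by
  induction l with
  | zero => simp
  | succ l ih => rw [show n + 2 * (l + 1) = n + 2 * l + 2 by ring, w_add_two, ih, pow_succ]; ring

lemma two_dvd_w_succ (n : ℕ) : 2 ∣ w (n + 1) := by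
  rcases Nat.even_or_odd' n with ⟨k, rfl | rfl⟩
  · rw [w_odd]; exact ⟨2 * 2 ^ k, by ring⟩
  · rw [show 2 * k + 1 + 1 = 2 * (k + 1) by ring, w_even]; exact ⟨3 * 2 ^ k, by ring⟩

lemma w_lt_w_succ (n : ℕ) : w n < w (n + 1) := by
  rcases Nat.even_or_odd' n with ⟨k, rfl | rfl⟩
  · rw [w_even, w_odd]; have := Nat.one_le_two_pow (n := k); omega
  · rw [show 2 * k + 1 + 1 = 2 * (k + 1) by ring, w_odd, w_even, pow_succ]
    have := Nat.one_le_two_pow (n := k); omega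

lemma w_succ_add_two_le (n : ℕ) : w (n + 1) + 2 ≤ 2 * w n := by
  rcases Nat.even_or_odd' n with ⟨k, rfl | rfl⟩
  · rw [w_even, w_odd]; have := Nat.one_le_two_pow (n := k); omega
  · rw [show 2 * k + 1 + 1 = 2 * (k + 1) by ring, w_odd, w_even, pow_succ]
    have := Nat.one_le_two_pow (n := k); omega

lemma w_le_two_pow (n : ℕ) : w n ≤ 2 ^ (n / 2 + 2) := by
  rcases Nat.even_or_odd' n with ⟨k, rfl | rfl⟩
  · rw [w_even, show 2 * k / 2 = k by omega, pow_add]; omega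
  · rw [w_odd, show (2 * k + 1) / 2 = k by omega, pow_add]; omega

abbrev digits : Set GaussianInt := {0, 1, -1, ⟨0, 1⟩, ⟨0, -1⟩}

lemma mul_mem_digits {u v : GaussianInt} (hu : u ∈ digits) (hv : v ∈ digits) :
    u * v ∈ digits := by
  simp only [Set.mem_insert_iff, Set.mem_singleton_iff] at hu hv ⊢
  rcases hu with rfl | rfl | rfl | rfl | rfl <;> rcases hv with rfl | rfl | rfl | rfl | rfl <;>
    simp [Zsqrtd.ext_iff]

lemma mem_Bset_zero {v : GaussianInt} (hv : v ∈ digits) : v ∈ Bset 0 :=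
  ⟨fun _ => v, fun _ => hv, by simp⟩

lemma add_mul_mem_Bset_succ {v z : GaussianInt} {n : ℕ} (hv : v ∈ digits) (hz : z ∈ Bset n) :
    v + ⟨1, 1⟩ * z ∈ Bset (n + 1) := by
  obtain ⟨d, hd, rfl⟩ := hz
  refine ⟨fun j => if j = 0 then v else d (j - 1), fun j => ?_, ?_⟩
  · dsimp only; split_ifs; exacts [hv, hd _]
  · rw [Finset.sum_range_succ' _ (n + 1), Finset.mul_sum]
    simp [pow_succ, mul_comm, mul_left_comm, add_comm]

lemma mul_mem_Bset {u z : GaussianInt} {n : ℕ} (hu : u ∈ digits) (hz : z ∈ Bset n) :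
    u * z ∈ Bset n := by
  obtain ⟨d, hd, rfl⟩ := hz
  exact ⟨fun j => u * d j, fun j => mul_mem_digits hu (hd j), by simp [Finset.mul_sum, mul_assoc]⟩

lemma two_mul_mem_Bset {z : GaussianInt} {n : ℕ} (hz : z ∈ Bset n) : 2 * z ∈ Bset (n + 2) := by
  have h := add_mul_mem_Bset_succ (v := 0) (by simp) <|
    add_mul_mem_Bset_succ (v := 0) (by simp) <| mul_mem_Bset (u := ⟨0, -1⟩) (by simp) hz
  convert h using 1
  rw [zero_add, zero_add, ← mul_assoc, ← mul_assoc]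
  congr 1

lemma two_pow_mul_mem_Bset {z : GaussianInt} {n : ℕ} (l : ℕ) (hz : z ∈ Bset n) :
    2 ^ l * z ∈ Bset (n + 2 * l) := by
  induction l with
  | zero => simpa using hz
  | succ l ih =>
    rw [pow_succ', mul_assoc, show n + 2 * (l + 1) = n + 2 * l + 2 by ring]
    exact two_mul_mem_Bset ih

def Oct (n : ℕ) : Set GaussianInt :=
  {z | |z.re| ≤ (w n : ℤ) - 2 ∧ |z.im| ≤ (w n : ℤ) - 2 ∧ |z.re| + |z.im| ≤ (w (n + 1) : ℤ) - 3}

/-- The paper's `S_n`: `2 ∤ gcd(x, y)` says that `x` and `y` are not both even, which also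
excludes `0`. -/
def primOct (n : ℕ) : Set GaussianInt :=
  {z ∈ Oct n | ¬ (2 ∣ z.re ∧ 2 ∣ z.im)}

lemma primOct_zero_subset_digits : primOct 0 ⊆ digits := by
  rintro ⟨x, y⟩ ⟨⟨hx, hy, hxy⟩, hodd⟩
  simp only [show w 0 = 3 from rfl, show w (0 + 1) = 4 from rfl, abs_eq_max_neg] at hx hy hxy hodd
  have : (x = 1 ∧ y = 0) ∨ (x = -1 ∧ y = 0) ∨ (x = 0 ∧ y = 1) ∨ (x = 0 ∧ y = -1) := by omega
  rcases this with ⟨rfl, rfl⟩ | ⟨rfl, rfl⟩ | ⟨rfl, rfl⟩ | ⟨rfl, rfl⟩ <;> simp [Zsqrtd.ext_iff]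

lemma exists_digit_decomp {m : ℕ} {z : GaussianInt} (hz : z ∈ primOct (m + 1)) :
    ∃ v ∈ digits, ∃ z' ∈ primOct m, z = v + ⟨1, 1⟩ * z' := by
  obtain ⟨x, y⟩ := z
  obtain ⟨⟨hx, hy, hxy⟩, hodd⟩ := hz
  have hw₂ : w (m + 1 + 1) = 2 * w m := w_add_two m
  have hw₁ := two_dvd_w_succ m
  have hw := w_succ_add_two_le m
  suffices ∃ s t a b : ℤ, (⟨s, t⟩ : GaussianInt) ∈ digits ∧ x = s + a - b ∧ y = t + a + b ∧
      (⟨a, b⟩ : GaussianInt) ∈ primOct m by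
    obtain ⟨s, t, a, b, hst, rfl, rfl, hab⟩ := this
    exact ⟨_, hst, _, hab, by ext <;> simp <;> ring⟩
  simp only [primOct, Oct, Set.mem_ofPred_eq, abs_eq_max_neg] at hx hy hxy hodd ⊢
  -- `v` is chosen so that `x - s` and `y - t` have the same parity (i.e. `1 + i ∣ z - v`) with
  -- `y - t = a + b` odd, and so that it moves `z` towards `0`.
  rcases Int.emod_two_eq_zero_or_one x with hx2 | hx2 <;>
    rcases Int.emod_two_eq_zero_or_one y with hy2 | hy2
  · omega
  · rcases le_or_gt x 0 with hxs | hxs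
    · exact ⟨-1, 0, (x + 1 + y) / 2, (y - x - 1) / 2, by simp [Zsqrtd.ext_iff], by omega⟩
    · exact ⟨1, 0, (x - 1 + y) / 2, (y - x + 1) / 2, by simp [Zsqrtd.ext_iff], by omega⟩
  · rcases le_or_gt y 0 with hys | hys
    · exact ⟨0, -1, (x + y + 1) / 2, (y + 1 - x) / 2, by simp [Zsqrtd.ext_iff], by omega⟩
    · exact ⟨0, 1, (x + y - 1) / 2, (y - 1 - x) / 2, by simp [Zsqrtd.ext_iff], by omega⟩
  · exact ⟨0, 0, (x + y) / 2, (y - x) / 2, by simp [Zsqrtd.ext_iff], by omega⟩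

lemma primOct_subset_Bset (m : ℕ) : primOct m ⊆ Bset m := by
  induction m with
  | zero => exact fun z hz => mem_Bset_zero (primOct_zero_subset_digits hz)
  | succ m ih =>
    intro z hz
    obtain ⟨v, hv, z', hz', rfl⟩ := exists_digit_decomp hz
    exact add_mul_mem_Bset_succ hv (ih hz')

lemma dvd_int_gcd_iff (k : ℕ) (x y : ℤ) : k ∣ Int.gcd x y ↔ (k : ℤ) ∣ x ∧ (k : ℤ) ∣ y :=
  ⟨fun h => ⟨(Int.natCast_dvd_natCast.mpr h).trans (Int.gcd_dvd_left x y),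
    (Int.natCast_dvd_natCast.mpr h).trans (Int.gcd_dvd_right x y)⟩,
   fun h => Int.dvd_gcd h.1 h.2⟩

lemma mk_mem_Oct_succ_of_two_pow_mul_mem {j l : ℕ} {a b : ℤ}
    (h : (⟨2 ^ l * a, 2 ^ l * b⟩ : GaussianInt) ∈ Oct (j + 2 * l)) :
    (⟨a, b⟩ : GaussianInt) ∈ Oct (j + 1) := by
  obtain ⟨ha, hb, hab⟩ := h
  rw [show j + 2 * l + 1 = j + 1 + 2 * l by ring, w_add_two_mul] at hab
  rw [w_add_two_mul] at ha hb
  simp only [abs_mul, abs_pow, abs_two, Nat.cast_mul, Nat.cast_pow, Nat.cast_ofNat] at ha hb hab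
  have hpos : (0 : ℤ) < 2 ^ l := by positivity
  have ha' : |a| < w j := lt_of_mul_lt_mul_left (by linarith) hpos.le
  have hb' : |b| < w j := lt_of_mul_lt_mul_left (by linarith) hpos.le
  have hab' : |a| + |b| < w (j + 1) := lt_of_mul_lt_mul_left (by linarith) hpos.le
  have hw₁ := w_lt_w_succ j
  have hw₂ := w_succ_add_two_le j
  have hw₂' : w (j + 1 + 1) = 2 * w j := w_add_two j
  refine ⟨?_, ?_, ?_⟩ <;> dsimp only <;> omega

lemma eq_zero_of_mem_Oct_of_two_pow_dvd {n : ℕ} {z : GaussianInt} (hz : z ∈ Oct n)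
    (hre : 2 ^ (n / 2 + 2) ∣ z.re) (him : 2 ^ (n / 2 + 2) ∣ z.im) : z = 0 := by
  have hw : (w n : ℤ) ≤ 2 ^ (n / 2 + 2) := by exact_mod_cast w_le_two_pow n
  ext
  · exact Int.eq_zero_of_abs_lt_dvd hre (by linarith [hz.1])
  · exact Int.eq_zero_of_abs_lt_dvd him (by linarith [hz.2.1])

theorem oct_exact_pow_in_B_succ (n l : ℕ) (x y : ℤ)
    (hne : (⟨x, y⟩ : GaussianInt) ≠ 0)
    (hx : |x| ≤ (w n : ℤ) - 2) (hy : |y| ≤ (w n : ℤ) - 2)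
    (hxy : |x| + |y| ≤ (w (n + 1) : ℤ) - 3)
    (hl : 2 ^ l ∣ Int.gcd x y) (hl2 : ¬ 2 ^ (l + 1) ∣ Int.gcd x y)
    (hne2 : l ≠ n / 2 + 1) :
    l ≤ n / 2 ∧ (⟨x, y⟩ : GaussianInt) ∈ Bset (n + 1) := by
  have hz : (⟨x, y⟩ : GaussianInt) ∈ Oct n := ⟨hx, hy, hxy⟩
  have hdvd (k : ℕ) : 2 ^ k ∣ Int.gcd x y ↔ (2 : ℤ) ^ k ∣ x ∧ (2 : ℤ) ^ k ∣ y := by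
    exact_mod_cast dvd_int_gcd_iff (2 ^ k) x y
  have hl_le : l ≤ n / 2 := by
    by_contra! hlt
    have h := (hdvd _).mp (Nat.pow_dvd_pow 2 (show n / 2 + 2 ≤ l by omega) |>.trans hl)
    exact hne (eq_zero_of_mem_Oct_of_two_pow_dvd hz h.1 h.2)
  refine ⟨hl_le, ?_⟩
  obtain ⟨⟨a, rfl⟩, ⟨b, rfl⟩⟩ := (hdvd l).mp hl
  have hab : ¬ (2 ∣ a ∧ 2 ∣ b) := fun ⟨ha, hb⟩ => hl2 <| (hdvd _).mpr
    ⟨pow_succ (2 : ℤ) l ▸ mul_dvd_mul_left _ ha, pow_succ (2 : ℤ) l ▸ mul_dvd_mul_left _ hb⟩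
  obtain ⟨j, rfl⟩ : ∃ j, n = j + 2 * l := ⟨n - 2 * l, by omega⟩
  have hB := two_pow_mul_mem_Bset l <|
    primOct_subset_Bset _ ⟨mk_mem_Oct_succ_of_two_pow_mul_mem hz, hab⟩
  rw [show j + 1 + 2 * l = j + 2 * l + 1 by ring] at hB
  convert hB using 1
  simpa using (Zsqrtd.nsmul_val (d := -1) (2 ^ l) a b).symm
end
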